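/- Example 2, case a ≥ −2 (failure of local controllability): Let −2 ≤ a < 1. The control dynamical system ẋ₁(t) = u(t), ẋ₂(t) = u(t)³, u(t) ∈ (a,+∞) for a.e. t ∈ [0,1], with boundary conditions x₁(0) = x₂(0) = 0 and x₁(1) = x₂(1) = 1, is NOT locally controllable with respect to the admissible process given by x̂₁(t) = x̂₂(t) = t and û(t) = 1 for t ∈ [0,1]. -/

import Mathlib

/-!
On `[-2, ∞)` the cube lies above its tangent line at `1`, since
`u³ - (3u - 2) = (u - 1)²(u + 2)`. Integrating along any admissible control gives
`x₂(1) - x₂(0) ≥ 3 (x₁(1) - x₁(0)) - 2`. The endpoint perturbation `x(0) = (0,0)`,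
`x(1) = (1 + s, 1)` with `s > 0` would need `1 ≥ 1 + 3s`, so arbitrarily small
perturbations of the boundary data are not reachable.
-/

open MeasureTheory Set intervalIntegral

theorem three_mul_sub_two_le_pow_three {u : ℝ} (hu : -2 ≤ u) : 3 * u - 2 ≤ u ^ 3 := by
  nlinarith [mul_nonneg (sq_nonneg (u - 1)) (neg_le_iff_add_nonneg.mp hu)]

theorem three_mul_integral_sub_le_integral_pow_three {u : ℝ → ℝ} {a b : ℝ} (hab : a ≤ b)
    (hu : IntervalIntegrable u volume a b)
    (hu3 : IntervalIntegrable (fun t => u t ^ 3) volume a b)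
    (hlow : ∀ᵐ t ∂(volume.restrict (Icc a b)), -2 ≤ u t) :
    3 * (∫ t in a..b, u t) - 2 * (b - a) ≤ ∫ t in a..b, u t ^ 3 := by
  have hlin : IntervalIntegrable (fun t => 3 * u t - 2) volume a b :=
    (hu.const_mul 3).sub intervalIntegrable_const
  calc 3 * (∫ t in a..b, u t) - 2 * (b - a) = ∫ t in a..b, 3 * u t - 2 := by
        rw [integral_sub (hu.const_mul 3) intervalIntegrable_const,
          intervalIntegral.integral_const_mul, intervalIntegral.integral_const, smul_eq_mul]
        ring
    _ ≤ ∫ t in a..b, u t ^ 3 :=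
        integral_mono_ae_restrict hab hlin hu3 <| hlow.mono fun t ht =>
          three_mul_sub_two_le_pow_three ht

theorem example2_not_locally_controllable_general (a : ℝ) (ha : -2 ≤ a) :
    ¬ (∀ δ > (0:ℝ), ∃ ρ > (0:ℝ),
      ∀ y : (ℝ × ℝ) × (ℝ × ℝ), ‖y‖ < ρ →
        ∃ x₁ x₂ u : ℝ → ℝ,
          ContinuousOn x₁ (Icc (0:ℝ) 1) ∧ ContinuousOn x₂ (Icc (0:ℝ) 1) ∧
          Measurable u ∧
          (∃ C : ℝ, ∀ᵐ t ∂(volume.restrict (Icc (0:ℝ) 1)), |u t| ≤ C) ∧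
          (∀ᵐ t ∂(volume.restrict (Icc (0:ℝ) 1)), a < u t) ∧
          IntervalIntegrable u volume 0 1 ∧
          IntervalIntegrable (fun s => (u s) ^ 3) volume 0 1 ∧
          (∀ t ∈ Icc (0:ℝ) 1, x₁ t = x₁ 0 + ∫ s in (0:ℝ)..t, u s) ∧
          (∀ t ∈ Icc (0:ℝ) 1, x₂ t = x₂ 0 + ∫ s in (0:ℝ)..t, (u s) ^ 3) ∧
          (x₁ 0, x₂ 0) = y.1 ∧ (x₁ 1, x₂ 1) = ((1:ℝ), (1:ℝ)) + y.2 ∧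
          (∀ t ∈ Icc (0:ℝ) 1, |x₁ t - t| < δ ∧ |x₂ t - t| < δ)) := by
  intro h
  obtain ⟨ρ, hρ, hreach⟩ := h 1 one_pos
  set s := ρ / 2
  have hs : 0 < s := by positivity
  have hy : ‖(((0, 0), (s, 0)) : (ℝ × ℝ) × (ℝ × ℝ))‖ < ρ := by
    simp [Prod.norm_def, s, abs_of_pos hρ, hρ]
  obtain ⟨x₁, x₂, u, -, -, -, -, hau, hu, hu3, hx₁, hx₂, hstart, hend, -⟩ := hreach _ hy
  simp only [Prod.mk.injEq, Prod.mk_add_mk, add_zero] at hstart hend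
  have hint : ∫ t in (0:ℝ)..1, u t = 1 + s := by
    linarith [hx₁ 1 (right_mem_Icc.mpr zero_le_one)]
  have hint3 : ∫ t in (0:ℝ)..1, u t ^ 3 = 1 := by
    linarith [hx₂ 1 (right_mem_Icc.mpr zero_le_one)]
  have hcube := three_mul_integral_sub_le_integral_pow_three zero_le_one hu hu3
    (hau.mono fun t ht => ha.trans ht.le)
  linarith

/-- **Example 2, case `−2 ≤ a < 1` (failure of local controllability).**
The system `ẋ₁ = u`, `ẋ₂ = u³`, `u(t) ∈ (a,+∞)` a.e. on `[0,1]`, with boundary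
conditions `x(0) = (0,0)`, `x(1) = (1,1)`, is NOT locally controllable with respect to
the admissible process `x̂₁(t)=x̂₂(t)=t`, `û(t)=1`. -/
theorem example2_not_locally_controllable (a : ℝ) (ha : -2 ≤ a) (ha1 : a < 1) :
    ¬ (∀ δ > (0:ℝ), ∃ ρ > (0:ℝ),
      ∀ y : (ℝ × ℝ) × (ℝ × ℝ), ‖y‖ < ρ →
        ∃ x₁ x₂ u : ℝ → ℝ,
          ContinuousOn x₁ (Icc (0:ℝ) 1) ∧ ContinuousOn x₂ (Icc (0:ℝ) 1) ∧
          Measurable u ∧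
          (∃ C : ℝ, ∀ᵐ t ∂(volume.restrict (Icc (0:ℝ) 1)), |u t| ≤ C) ∧
          (∀ᵐ t ∂(volume.restrict (Icc (0:ℝ) 1)), a < u t) ∧
          IntervalIntegrable u volume 0 1 ∧
          IntervalIntegrable (fun s => (u s) ^ 3) volume 0 1 ∧
          (∀ t ∈ Icc (0:ℝ) 1, x₁ t = x₁ 0 + ∫ s in (0:ℝ)..t, u s) ∧
          (∀ t ∈ Icc (0:ℝ) 1, x₂ t = x₂ 0 + ∫ s in (0:ℝ)..t, (u s) ^ 3) ∧
          (x₁ 0, x₂ 0) = y.1 ∧ (x₁ 1, x₂ 1) = ((1:ℝ), (1:ℝ)) + y.2 ∧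
          (∀ t ∈ Icc (0:ℝ) 1, |x₁ t - t| < δ ∧ |x₂ t - t| < δ)) :=
  example2_not_locally_controllable_general a ha
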